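/- Reduction of finite validity to InqBQ validity: for every first-order sentence α in a signature Σ not containing the constants a,b, the following are equivalent: (1) α is finitely valid (true in every finite relational structure for Σ); (2) the formula η → (α ⩒ θ) is id-valid in InqBQ over the signature Σ∪{a,b}; (3) the formula (ρ ∧ η) → (α ⩒ θ) is valid in InqBQ over the signature Σ∪{a,b}, where ρ := ∀x∀y?(x=y). -/

import Mathlib

namespace InqBQ

/-- A signature: predicate symbols and function symbols, each with an arity. -/
structure Sig where
  Pred : Type
  parity : Pred → ℕ
  Func : Type
  farity : Func → ℕ

/-- Terms over a signature, with variables indexed by `ℕ`. -/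
inductive Term (σ : Sig) : Type where
  | var : ℕ → Term σ
  | func : (f : σ.Func) → (Fin (σ.farity f) → Term σ) → Term σ

/-- Formulas of InqBQ. -/
inductive Formula (σ : Sig) : Type where
  | pred : (P : σ.Pred) → (Fin (σ.parity P) → Term σ) → Formula σ
  | eq : Term σ → Term σ → Formula σ
  | falsum : Formula σ
  | conj : Formula σ → Formula σ → Formula σ
  | idisj : Formula σ → Formula σ → Formula σ
  | impl : Formula σ → Formula σ → Formula σ
  | all : ℕ → Formula σ → Formula σ
  | iex : ℕ → Formula σ → Formula σ

variable {σ : Sig}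

/-- ¬φ := φ → ⊥ -/
def Formula.neg (φ : Formula σ) : Formula σ := .impl φ .falsum

/-- ?φ := φ ⩒ ¬φ -/
def Formula.qm (φ : Formula σ) : Formula σ := .idisj φ φ.neg

/-- ⊤ := ¬⊥ -/
def Formula.verum : Formula σ := Formula.neg .falsum

/-- Classical formulas: no inquisitive disjunction, no inquisitive existential. -/
def Formula.IsClassical : Formula σ → Prop
  | .pred _ _ => True
  | .eq _ _ => True
  | .falsum => True
  | .conj φ ψ => φ.IsClassical ∧ ψ.IsClassical
  | .idisj _ _ => False
  | .impl φ ψ => φ.IsClassical ∧ ψ.IsClassical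
  | .all _ φ => φ.IsClassical
  | .iex _ _ => False

/-- The variable `n` occurs in a term. -/
def Term.VarOccurs : Term σ → ℕ → Prop
  | .var m, n => m = n
  | .func _ ts, n => ∃ i, (ts i).VarOccurs n

/-- The variable `n` occurs free in a formula. -/
def Formula.FreeVar : Formula σ → ℕ → Prop
  | .pred _ ts, n => ∃ i, (ts i).VarOccurs n
  | .eq t t', n => t.VarOccurs n ∨ t'.VarOccurs n
  | .falsum, _ => False
  | .conj φ ψ, n => φ.FreeVar n ∨ ψ.FreeVar n
  | .idisj φ ψ, n => φ.FreeVar n ∨ ψ.FreeVar n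
  | .impl φ ψ, n => φ.FreeVar n ∨ ψ.FreeVar n
  | .all x φ, n => n ≠ x ∧ φ.FreeVar n
  | .iex x φ, n => n ≠ x ∧ φ.FreeVar n

/-- A sentence is a formula with no free variables. -/
def Formula.IsSentence (φ : Formula σ) : Prop := ∀ n, ¬ φ.FreeVar n

/-- A first-order information model `M = (W, D, I, ∼)`. -/
structure Model (σ : Sig) where
  W : Type
  D : Type
  wNonempty : Nonempty W
  dNonempty : Nonempty D
  predI : W → (P : σ.Pred) → (Fin (σ.parity P) → D) → Prop
  funcI : W → (f : σ.Func) → (Fin (σ.farity f) → D) → D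
  eqI : W → D → D → Prop
  eqEquiv : ∀ w, Equivalence (eqI w)
  predCongr : ∀ w P (as bs : Fin (σ.parity P) → D),
      (∀ i, eqI w (as i) (bs i)) → (predI w P as ↔ predI w P bs)
  funcCongr : ∀ w f (as bs : Fin (σ.farity f) → D),
      (∀ i, eqI w (as i) (bs i)) → eqI w (funcI w f as) (funcI w f bs)

/-- Denotation `[t]^g_w` of a term at a world under an assignment. -/
def Term.val (M : Model σ) (w : M.W) (g : ℕ → M.D) : Term σ → M.D
  | .var n => g n
  | .func f ts => M.funcI w f (fun i => (ts i).val M w g)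

/-- The support relation `M, s ⊨_g φ`. -/
def Support (M : Model σ) : Set M.W → (ℕ → M.D) → Formula σ → Prop
  | s, g, .pred P ts => ∀ w ∈ s, M.predI w P (fun i => (ts i).val M w g)
  | s, g, .eq t t' => ∀ w ∈ s, M.eqI w (t.val M w g) (t'.val M w g)
  | s, _, .falsum => s = ∅
  | s, g, .conj φ ψ => Support M s g φ ∧ Support M s g ψ
  | s, g, .idisj φ ψ => Support M s g φ ∨ Support M s g ψ
  | s, g, .impl φ ψ => ∀ t : Set M.W, t ⊆ s → Support M t g φ → Support M t g ψ
  | s, g, .all x φ => ∀ d : M.D, Support M s (Function.update g x d) φ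
  | s, g, .iex x φ => ∃ d : M.D, Support M s (Function.update g x d) φ

/-- Id-models: `=` is interpreted as identity on the domain at each world. -/
def Model.IsId (M : Model σ) : Prop := ∀ w (d d' : M.D), M.eqI w d d' ↔ d = d'

/-- Entailment in InqBQ. -/
def Entails (Φ : Set (Formula σ)) (ψ : Formula σ) : Prop :=
  ∀ (M : Model σ) (s : Set M.W) (g : ℕ → M.D),
    (∀ φ ∈ Φ, Support M s g φ) → Support M s g ψ

/-- Entailment restricted to id-models. -/
def EntailsId (Φ : Set (Formula σ)) (ψ : Formula σ) : Prop :=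
  ∀ (M : Model σ), M.IsId → ∀ (s : Set M.W) (g : ℕ → M.D),
    (∀ φ ∈ Φ, Support M s g φ) → Support M s g ψ

/-- Validity in InqBQ. -/
def Valid (ψ : Formula σ) : Prop :=
  ∀ (M : Model σ) (s : Set M.W) (g : ℕ → M.D), Support M s g ψ

/-- Validity over id-models. -/
def IdValid (ψ : Formula σ) : Prop :=
  ∀ (M : Model σ), M.IsId → ∀ (s : Set M.W) (g : ℕ → M.D), Support M s g ψ

/-- Equivalence of formulas. -/
def FmEquiv (φ ψ : Formula σ) : Prop :=
  ∀ (M : Model σ) (s : Set M.W) (g : ℕ → M.D), Support M s g φ ↔ Support M s g ψ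

/-- A formula is truth-conditional if support at a state reduces to truth at each world. -/
def TruthConditional (φ : Formula σ) : Prop :=
  ∀ (M : Model σ) (s : Set M.W) (g : ℕ → M.D),
    Support M s g φ ↔ ∀ w ∈ s, Support M {w} g φ

/-- A standard (Tarskian) relational structure for the signature. -/
structure Struc (σ : Sig) where
  D : Type
  dNonempty : Nonempty D
  predI : (P : σ.Pred) → (Fin (σ.parity P) → D) → Prop
  funcI : (f : σ.Func) → (Fin (σ.farity f) → D) → D

/-- Tarskian term denotation. -/
def Term.tval (A : Struc σ) (g : ℕ → A.D) : Term σ → A.D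
  | .var n => g n
  | .func f ts => A.funcI f (fun i => (ts i).tval A g)

/-- Standard Tarskian satisfaction (reading `→` as material implication, `=` as identity). -/
def TSat (A : Struc σ) : (ℕ → A.D) → Formula σ → Prop
  | g, .pred P ts => A.predI P (fun i => (ts i).tval A g)
  | g, .eq t t' => t.tval A g = t'.tval A g
  | _, .falsum => False
  | g, .conj φ ψ => TSat A g φ ∧ TSat A g ψ
  | g, .idisj φ ψ => TSat A g φ ∨ TSat A g ψ
  | g, .impl φ ψ => TSat A g φ → TSat A g ψ
  | g, .all x φ => ∀ d : A.D, TSat A (Function.update g x d) φ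
  | g, .iex x φ => ∃ d : A.D, TSat A (Function.update g x d) φ

/-- Classical first-order (Tarskian) entailment. -/
def FOLEntails (Γ : Set (Formula σ)) (α : Formula σ) : Prop :=
  ∀ (A : Struc σ) (g : ℕ → A.D), (∀ γ ∈ Γ, TSat A g γ) → TSat A g α

/-- The setoid on the domain given by `∼_w`. -/
def Model.setoidAt (M : Model σ) (w : M.W) : Setoid M.D := ⟨M.eqI w, M.eqEquiv w⟩

/-- The quotient relational structure `𝓜_w = (D/∼_w, I_w^∼)` induced at world `w`. -/
noncomputable def Model.quotStruc (M : Model σ) (w : M.W) : Struc σ where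
  D := Quotient (M.setoidAt w)
  dNonempty := Nonempty.map (Quotient.mk (M.setoidAt w)) M.dNonempty
  predI P as := ∃ bs : Fin (σ.parity P) → M.D,
    (∀ i, Quotient.mk (M.setoidAt w) (bs i) = as i) ∧ M.predI w P bs
  funcI f as := Quotient.mk (M.setoidAt w) (M.funcI w f (fun i => (as i).out))

/-- λt := ∃̷x (x = t). -/
def lam (x : ℕ) (t : Term σ) : Formula σ := .iex x (.eq (.var x) t)

/-- Conjunction of a finite list of formulas. -/
def conjList (l : List (Formula σ)) : Formula σ := l.foldr .conj Formula.verum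

/-- x ≠ t. -/
def neTm (x : ℕ) (t : Term σ) : Formula σ := (Formula.eq (.var x) t).neg

/-- ∃̷x (x ≠ t). -/
def iexNe (t : Term σ) : Formula σ := .iex 0 (neTm 0 t)

/-- η := (=(a;b) ∧ =(b;a) ∧ ∃̷x(x≠b)) → ∃̷x(x≠a). -/
def etaOf (a b : Term σ) : Formula σ :=
  .impl (.conj (.impl (lam 0 a) (lam 0 b))
          (.conj (.impl (lam 0 b) (lam 0 a)) (iexNe b)))
    (iexNe a)

/-- θ := ∃̷x ∃̷y ¬(x = a ∧ y = b). -/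
def thetaOf (a b : Term σ) : Formula σ :=
  .iex 0 (.iex 1 (Formula.neg (.conj (.eq (.var 0) a) (.eq (.var 1) b))))

/-- ρ := ∀x∀y ?(x = y). -/
def rho : Formula σ := .all 0 (.all 1 (Formula.qm (.eq (.var 0) (.var 1))))

/-- The signature with exactly two constant symbols `a`, `b` (and no predicates). -/
def sigAB : Sig where
  Pred := Empty
  parity := fun P => P.elim
  Func := Bool
  farity := fun _ => 0

/-- The constant `a`. -/
def tA : Term sigAB := .func false Fin.elim0

/-- The constant `b`. -/
def tB : Term sigAB := .func true Fin.elim0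

def etaAB : Formula sigAB := etaOf tA tB

def thetaAB : Formula sigAB := thetaOf tA tB

/-- `a_w`. -/
def aVal (M : Model sigAB) (w : M.W) : M.D := M.funcI w false Fin.elim0

/-- `b_w`. -/
def bVal (M : Model sigAB) (w : M.W) : M.D := M.funcI w true Fin.elim0

/-- `R_s = {(a_w, b_w) | w ∈ s}`. -/
def RelOf (M : Model sigAB) (s : Set M.W) : Set (M.D × M.D) :=
  {p | ∃ w ∈ s, p = (aVal M w, bVal M w)}

/-- An id-model (for the signature with the two constants a, b) is full if `R_W = D × D`. -/
def Model.IsFull (M : Model sigAB) : Prop := RelOf M Set.univ = Set.univ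

/-- Classical existential quantifier ∃xφ := ¬∀x¬φ. -/
def cExists (x : ℕ) (φ : Formula σ) : Formula σ := (Formula.all x φ.neg).neg

/-- ⋀_{i<j<n} (xᵢ ≠ xⱼ). -/
def distinctFm (n : ℕ) : Formula sigAB :=
  conjList ((List.range n).flatMap fun i => (List.range n).filterMap fun j =>
    if i < j then some ((Formula.eq (.var i) (.var j)).neg) else none)

/-- χₙ := ∃x₁…∃xₙ ⋀_{i<j} (xᵢ ≠ xⱼ), expressing that there are at least n elements. -/
def chi (n : ℕ) : Formula sigAB := (List.range n).foldr cExists (distinctFm n)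

/-- The canonical full id-model over a nonempty domain `D`: worlds are pairs `(d, e)`,
with `a_{(d,e)} = d` and `b_{(d,e)} = e`. -/
def canonModel (D : Type) (hD : Nonempty D) : Model sigAB where
  W := D × D
  D := D
  wNonempty := Nonempty.map (fun d => (d, d)) hD
  dNonempty := hD
  predI := fun _ P => P.elim
  funcI := fun w f _ => cond f w.2 w.1
  eqI := fun _ => Eq
  eqEquiv := fun _ => eq_equivalence
  predCongr := fun _ P => P.elim
  funcCongr := fun _ _ _ _ _ => rfl

/-- Extending a signature with two fresh constant symbols `a`, `b`. -/
def sigExt (σ : Sig) : Sig where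
  Pred := σ.Pred
  parity := σ.parity
  Func := σ.Func ⊕ Bool
  farity := Sum.elim σ.farity (fun _ => 0)

/-- Lift of a term to the extended signature. -/
def Term.lift : Term σ → Term (sigExt σ)
  | .var n => .var n
  | .func f ts => .func (Sum.inl f) (fun i => (ts i).lift)

/-- Lift of a formula to the extended signature. -/
def Formula.lift : Formula σ → Formula (sigExt σ)
  | .pred P ts => .pred P (fun i => (ts i).lift)
  | .eq t t' => .eq t.lift t'.lift
  | .falsum => .falsum
  | .conj φ ψ => .conj φ.lift ψ.lift
  | .idisj φ ψ => .idisj φ.lift ψ.lift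
  | .impl φ ψ => .impl φ.lift ψ.lift
  | .all x φ => .all x φ.lift
  | .iex x φ => .iex x φ.lift

/-- The fresh constant `a` of the extended signature. -/
def extA : Term (sigExt σ) := .func (Sum.inr false) Fin.elim0

/-- The fresh constant `b` of the extended signature. -/
def extB : Term (sigExt σ) := .func (Sum.inr true) Fin.elim0

/-- The canonical full id-model based on a relational structure `𝓜`: worlds are pairs
`(d, e)`; `a_{(d,e)} = d`, `b_{(d,e)} = e`, and all symbols of `σ` are interpreted
rigidly as in `𝓜`. -/
def canonModelOf (A : Struc σ) : Model (sigExt σ) where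
  W := A.D × A.D
  D := A.D
  wNonempty := Nonempty.map (fun d => (d, d)) A.dNonempty
  dNonempty := A.dNonempty
  predI := fun _ P => A.predI P
  funcI := fun w f => match f with
    | .inl f₀ => fun as => A.funcI f₀ as
    | .inr b => fun _ => cond b w.2 w.1
  eqI := fun _ => Eq
  eqEquiv := fun _ => eq_equivalence
  predCongr := fun _ P as bs h => by
    have hab : as = bs := funext fun i => h i
    rw [hab]
  funcCongr := fun w f as bs h => by
    have hab : as = bs := funext fun i => h i
    rw [hab]


/-!
If a state supports `ρ`, equality is the same relation at all its worlds, so everything can be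
read in one quotient `Q = D/∼`. There `θ` fails exactly when every pair of classes occurs as
some `(a_w, b_w)`, and then `η`, applied to the substate where `b = f ∘ a`, forbids an injection
`f : Q → Q` that misses a class: `Q` is Dedekind-finite. As `η` holds whenever `Q` is finite,
and a classical formula is supported exactly when it is true in the quotient structure of each
world, a finitely valid `α` is supported wherever `ρ`, `η` hold and `θ` fails. Conversely, over
a finite structure `𝓜` the id-model whose worlds are all pairs `(a, b)` supports `ρ` and `η`
but not `θ`, so it supports `α` only if `𝓜` satisfies `α`.
-/

open Function

theorem Term.val_update_of_not_varOccurs (M : Model σ) (w : M.W) (g : ℕ → M.D) {x : ℕ}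
    (d : M.D) {t : Term σ} (ht : ¬ t.VarOccurs x) :
    t.val M w (update g x d) = t.val M w g := by
  induction t with
  | var n => exact update_of_ne ht d g
  | func f ts ih => exact congrArg (M.funcI w f) (funext fun i => ih i fun hi => ht ⟨i, hi⟩)

theorem extA_not_varOccurs (n : ℕ) : ¬ (extA : Term (sigExt σ)).VarOccurs n :=
  fun ⟨i, _⟩ => i.elim0

theorem extB_not_varOccurs (n : ℕ) : ¬ (extB : Term (sigExt σ)).VarOccurs n :=
  fun ⟨i, _⟩ => i.elim0

section Support

variable {M : Model σ} {s : Set M.W} {g : ℕ → M.D}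

theorem support_neg_of_forall_iff {φ : Formula σ} (P : M.W → Prop)
    (hφ : ∀ t, Support M t g φ ↔ ∀ w ∈ t, P w) :
    Support M s g φ.neg ↔ ∀ w ∈ s, ¬ P w := by
  simp only [Formula.neg, Support, hφ]
  refine ⟨fun h w hw hP => ?_, fun h t ht hP => ?_⟩
  · simpa using h {w} (Set.singleton_subset_iff.2 hw) (by simpa using hP)
  · exact Set.eq_empty_of_forall_notMem fun w hw => h w (ht hw) (hP w hw)

theorem support_lam {t : Term σ} {x : ℕ} (ht : ¬ t.VarOccurs x) :
    Support M s g (lam x t) ↔ ∃ d, ∀ w ∈ s, M.eqI w d (t.val M w g) := by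
  simp only [lam, Support, Term.val, update_self, Term.val_update_of_not_varOccurs _ _ _ _ ht]

theorem support_iexNe {t : Term σ} (ht : ¬ t.VarOccurs 0) :
    Support M s g (iexNe t) ↔ ∃ d, ∀ w ∈ s, ¬ M.eqI w d (t.val M w g) := by
  refine exists_congr fun d => support_neg_of_forall_iff _ fun u => ?_
  simp only [Support, Term.val, update_self, Term.val_update_of_not_varOccurs _ _ _ _ ht]

theorem support_thetaOf {a b : Term σ} (ha : ∀ n, ¬ a.VarOccurs n)
    (hb : ∀ n, ¬ b.VarOccurs n) :
    Support M s g (thetaOf a b) ↔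
      ∃ d e, ∀ w ∈ s, ¬ (M.eqI w d (a.val M w g) ∧ M.eqI w e (b.val M w g)) := by
  refine exists₂_congr fun d e => support_neg_of_forall_iff _ fun u => ?_
  simp only [Support, Term.val, Term.val_update_of_not_varOccurs _ _ _ _ (ha _),
    Term.val_update_of_not_varOccurs _ _ _ _ (hb _), update_self,
    update_of_ne zero_ne_one, forall_and]

theorem support_rho :
    Support M s g rho ↔ ∀ d e, (∀ w ∈ s, M.eqI w d e) ∨ ∀ w ∈ s, ¬ M.eqI w d e := by
  refine forall₂_congr fun d e => or_congr ?_ (support_neg_of_forall_iff _ fun u => ?_) <;>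
    simp only [Support, Term.val, update_self, update_of_ne zero_ne_one]

theorem Model.IsId.support_rho (hM : M.IsId) : Support M s g rho :=
  InqBQ.support_rho.2 fun d e =>
    (em (d = e)).imp (fun h w _ => (hM w d e).2 h) (fun h w _ hw => h ((hM w d e).1 hw))

end Support

structure Model.IsEqQuotientOn {Q : Type*} (M : Model σ) (s : Set M.W) (π : M.D → Q) :
    Prop where
  surjective : Surjective π
  eqI_iff : ∀ w ∈ s, ∀ d e, M.eqI w d e ↔ π d = π e

theorem Model.IsId.isEqQuotientOn_id {M : Model σ} (hM : M.IsId) (s : Set M.W) :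
    M.IsEqQuotientOn s id :=
  ⟨surjective_id, fun w _ => hM w⟩

theorem isEqQuotientOn_of_support_rho {M : Model σ} {s : Set M.W} {g : ℕ → M.D}
    (hρ : Support M s g rho) {w : M.W} (hw : w ∈ s) :
    M.IsEqQuotientOn s (Quotient.mk (M.setoidAt w)) := by
  refine ⟨Quotient.mk_surjective, fun w' hw' d e => ?_⟩
  rw [Quotient.eq]
  rcases support_rho.1 hρ d e with h | h
  · exact iff_of_true (h w' hw') (h w hw)
  · exact iff_of_false (h w' hw') (h w hw)

namespace Model.IsEqQuotientOn

variable {M : Model σ} {s v : Set M.W} {Q : Type*} {π : M.D → Q}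

theorem exists_forall_eqI_iff (hπ : M.IsEqQuotientOn s π) (hv : v ⊆ s) (c : M.W → M.D) :
    (∃ d, ∀ w ∈ v, M.eqI w d (c w)) ↔ ∃ p, ∀ w ∈ v, p = π (c w) := by
  rw [hπ.surjective.exists]
  exact exists_congr fun d => forall₂_congr fun w hw => hπ.eqI_iff w (hv hw) d (c w)

theorem exists_forall_not_eqI_iff (hπ : M.IsEqQuotientOn s π) (hv : v ⊆ s) (c : M.W → M.D) :
    (∃ d, ∀ w ∈ v, ¬ M.eqI w d (c w)) ↔ ∃ p, ∀ w ∈ v, p ≠ π (c w) := by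
  rw [hπ.surjective.exists]
  exact exists_congr fun d => forall₂_congr fun w hw =>
    not_congr (hπ.eqI_iff w (hv hw) d (c w))

end Model.IsEqQuotientOn

/-- What `η` says at `s` when equality is read in `Q`: on a substate where `a` and `b` determine
each other, i.e. `b ∘ a⁻¹` is a partial injection, if `b` misses a value then so does `a`. -/
def EtaCondition {W Q : Type*} (a b : W → Q) (s : Set W) : Prop :=
  ∀ u ⊆ s, (∀ v ⊆ u, (∃ p, ∀ w ∈ v, p = a w) → ∃ q, ∀ w ∈ v, q = b w) →
    (∀ v ⊆ u, (∃ q, ∀ w ∈ v, q = b w) → ∃ p, ∀ w ∈ v, p = a w) →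
    (∃ q, ∀ w ∈ u, q ≠ b w) → ∃ p, ∀ w ∈ u, p ≠ a w

theorem etaCondition_of_finite {W Q : Type*} [Finite Q] (a b : W → Q) (s : Set W) :
    EtaCondition a b s := by
  intro u _ hab hba ⟨q₀, hq₀⟩
  by_contra! hcover
  -- `f p` is the `b`-value where `a = p`; `=(b;a)` makes `f` injective, hence onto.
  choose f hf using fun p => hab {w ∈ u | p = a w} (fun _ hw => hw.1) ⟨p, fun _ hw => hw.2⟩
  have hinj : Injective f := by
    intro p p' hpp'
    obtain ⟨w, hw, rfl⟩ := hcover p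
    obtain ⟨w', hw', rfl⟩ := hcover p'
    obtain ⟨p'', hp''⟩ :=
      hba {x ∈ u | f (a w) = b x} (fun _ hx => hx.1) ⟨f (a w), fun _ hx => hx.2⟩
    exact (hp'' w ⟨hw, hf _ w ⟨hw, rfl⟩⟩).symm.trans
      (hp'' w' ⟨hw', hpp'.trans (hf _ w' ⟨hw', rfl⟩)⟩)
  obtain ⟨p, rfl⟩ := Finite.surjective_of_injective hinj q₀
  obtain ⟨w, hw, rfl⟩ := hcover p
  exact hq₀ w hw (hf _ w ⟨hw, rfl⟩)

theorem exists_injective_not_surjective (Q : Type*) [Infinite Q] :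
    ∃ f : Q → Q, Injective f ∧ ¬ Surjective f := by
  obtain ⟨e⟩ : Nonempty (Option Q ≃ Q) := Cardinal.eq.1 (by
    rw [Cardinal.mk_option, Cardinal.add_one_eq (Cardinal.aleph0_le_mk Q)])
  refine ⟨e ∘ some, e.injective.comp (Option.some_injective Q), fun h => ?_⟩
  obtain ⟨q, hq⟩ := h (e none)
  exact Option.some_ne_none q (e.injective hq)

theorem finite_of_etaCondition {W Q : Type*} {a b : W → Q} {s : Set W}
    (hη : EtaCondition a b s) (hfull : ∀ p q, ∃ w ∈ s, p = a w ∧ q = b w) : Finite Q := by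
  by_contra hQ
  have : Infinite Q := not_finite_iff_infinite.1 hQ
  obtain ⟨f, hinj, hsurj⟩ := exists_injective_not_surjective Q
  obtain ⟨q₀, hq₀⟩ := not_forall.1 hsurj
  set u := {w ∈ s | b w = f (a w)}
  have hab : ∀ v ⊆ u, (∃ p, ∀ w ∈ v, p = a w) → ∃ q, ∀ w ∈ v, q = b w := by
    rintro v hv ⟨p, hp⟩
    exact ⟨f p, fun w hw => by rw [(hv hw).2, hp w hw]⟩
  have hba : ∀ v ⊆ u, (∃ q, ∀ w ∈ v, q = b w) → ∃ p, ∀ w ∈ v, p = a w := by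
    rintro v hv ⟨q, hq⟩
    rcases v.eq_empty_or_nonempty with rfl | ⟨w₀, hw₀⟩
    · exact ⟨Classical.arbitrary Q, by simp⟩
    refine ⟨a w₀, fun w hw => hinj ?_⟩
    rw [← (hv hw₀).2, ← (hv hw).2, ← hq w₀ hw₀, ← hq w hw]
  obtain ⟨p₀, hp₀⟩ := hη u (fun _ hw => hw.1) hab hba
    ⟨q₀, fun w hw hq => hq₀ ⟨a w, by rw [← (show w ∈ u from hw).2, hq]⟩⟩
  obtain ⟨w, hw, rfl, hb⟩ := hfull p₀ (f p₀)
  exact hp₀ w ⟨hw, hb.symm⟩ rfl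

section Closed

variable {M : Model σ} {s : Set M.W} {g : ℕ → M.D} {Q : Type*} {π : M.D → Q} {a b : Term σ}

theorem support_thetaOf_iff (hπ : M.IsEqQuotientOn s π) (ha : ∀ n, ¬ a.VarOccurs n)
    (hb : ∀ n, ¬ b.VarOccurs n) :
    Support M s g (thetaOf a b) ↔
      ∃ p q, ∀ w ∈ s, ¬ (p = π (a.val M w g) ∧ q = π (b.val M w g)) := by
  rw [support_thetaOf ha hb, hπ.surjective.exists]
  refine exists_congr fun d => ?_
  rw [hπ.surjective.exists]
  exact exists_congr fun e => forall₂_congr fun w hw => by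
    rw [hπ.eqI_iff w hw, hπ.eqI_iff w hw]

theorem support_etaOf_iff (hπ : M.IsEqQuotientOn s π) (ha : ∀ n, ¬ a.VarOccurs n)
    (hb : ∀ n, ¬ b.VarOccurs n) :
    Support M s g (etaOf a b) ↔
      EtaCondition (fun w => π (a.val M w g)) (fun w => π (b.val M w g)) s := by
  simp only [etaOf, Support, support_lam (ha 0), support_lam (hb 0), support_iexNe (ha 0),
    support_iexNe (hb 0), and_imp]
  refine forall₂_congr fun u hu => ?_
  have hsub : ∀ v ⊆ u, v ⊆ s := fun v hv => hv.trans hu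
  rw [hπ.exists_forall_not_eqI_iff hu, hπ.exists_forall_not_eqI_iff hu]
  refine imp_congr (forall₂_congr fun v hv => ?_)
    (imp_congr (forall₂_congr fun v hv => ?_) Iff.rfl)
  all_goals rw [hπ.exists_forall_eqI_iff (hsub v hv), hπ.exists_forall_eqI_iff (hsub v hv)]

theorem finite_quotient_of_support (ha : ∀ n, ¬ a.VarOccurs n) (hb : ∀ n, ¬ b.VarOccurs n)
    (hρ : Support M s g rho) (hη : Support M s g (etaOf a b))
    (hθ : ¬ Support M s g (thetaOf a b)) {w : M.W} (hw : w ∈ s) :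
    Finite (Quotient (M.setoidAt w)) := by
  have hπ := isEqQuotientOn_of_support_rho hρ hw
  rw [support_thetaOf_iff hπ ha hb] at hθ
  push Not at hθ
  exact finite_of_etaCondition ((support_etaOf_iff hπ ha hb).1 hη) hθ

end Closed

structure Model.IsQuotientMapAt (M : Model σ) (w : M.W) (B : Struc σ) (h : M.D → B.D) :
    Prop where
  surjective : Surjective h
  eq_iff : ∀ d e, h d = h e ↔ M.eqI w d e
  predI_comp : ∀ P as, B.predI P (h ∘ as) ↔ M.predI w P as
  funcI_comp : ∀ f as, B.funcI f (h ∘ as) = h (M.funcI w f as)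

theorem Model.isQuotientMapAt_quotStruc (M : Model σ) (w : M.W) :
    M.IsQuotientMapAt w (M.quotStruc w) (Quotient.mk (M.setoidAt w)) where
  surjective := Quotient.mk_surjective
  eq_iff _ _ := Quotient.eq
  predI_comp P as :=
    ⟨fun ⟨bs, hbs, hP⟩ => (M.predCongr w P as bs fun i => Quotient.exact (hbs i).symm).2 hP,
      fun hP => ⟨as, fun _ => rfl, hP⟩⟩
  funcI_comp f as :=
    Quotient.sound <| M.funcCongr w f _ _ fun i => Quotient.mk_out (s := M.setoidAt w) (as i)

theorem Model.IsQuotientMapAt.tval_comp {M : Model σ} {w : M.W} {B : Struc σ} {h : M.D → B.D}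
    (hB : M.IsQuotientMapAt w B h) (g : ℕ → M.D) (t : Term σ) :
    t.tval B (h ∘ g) = h (t.val M w g) := by
  induction t with
  | var n => rfl
  | func f ts ih => exact (congrArg (B.funcI f) (funext ih)).trans (hB.funcI_comp f _)

theorem Formula.IsClassical.support_iff_forall_tsat {M : Model σ} {B : M.W → Struc σ}
    {h : ∀ w, M.D → (B w).D} (hB : ∀ w, M.IsQuotientMapAt w (B w) (h w)) {φ : Formula σ}
    (hφ : φ.IsClassical) (s : Set M.W) (g : ℕ → M.D) :
    Support M s g φ ↔ ∀ w ∈ s, TSat (B w) (h w ∘ g) φ := by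
  induction φ generalizing s g with
  | pred P ts =>
    simp only [Support, TSat, (hB _).tval_comp]
    exact forall₂_congr fun w _ => ((hB w).predI_comp P _).symm
  | eq t t' =>
    simp only [Support, TSat, (hB _).tval_comp]
    exact forall₂_congr fun w _ => ((hB w).eq_iff _ _).symm
  | falsum => exact Set.eq_empty_iff_forall_notMem
  | conj φ ψ ihφ ihψ =>
    rw [Support, ihφ hφ.1, ihψ hφ.2]
    exact forall₂_and.symm
  | idisj => exact hφ.elim
  | impl φ ψ ihφ ihψ =>
    simp only [Support, ihφ hφ.1, ihψ hφ.2]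
    refine ⟨fun hs w hw hwφ => ?_, fun hs t ht htφ w hw => hs w (ht hw) (htφ w hw)⟩
    exact hs {w} (Set.singleton_subset_iff.2 hw) (by simpa using hwφ) w rfl
  | all x φ ih =>
    simp only [Support, TSat, ih hφ, comp_update]
    exact ⟨fun hs w hw => (hB w).surjective.forall.2 fun d => hs d w hw,
      fun hs d w hw => hs w hw (h w d)⟩
  | iex => exact hφ.elim

def Struc.reduct (B : Struc (sigExt σ)) : Struc σ where
  D := B.D
  dNonempty := B.dNonempty
  predI := B.predI
  funcI f := B.funcI (.inl f)

/-- The expansion of `A` by `a := d`, `b := e`. -/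
def Struc.withConsts (A : Struc σ) (d e : A.D) : Struc (sigExt σ) where
  D := A.D
  dNonempty := A.dNonempty
  predI := A.predI
  funcI
    | .inl f => A.funcI f
    | .inr c => fun _ => cond c e d

theorem Term.tval_lift (B : Struc (sigExt σ)) (g : ℕ → B.D) (t : Term σ) :
    t.lift.tval B g = t.tval B.reduct g := by
  induction t with
  | var n => rfl
  | func f ts ih => exact congrArg (B.funcI (.inl f)) (funext ih)

theorem tsat_lift (B : Struc (sigExt σ)) (g : ℕ → B.D) (φ : Formula σ) :
    TSat B g φ.lift ↔ TSat B.reduct g φ := by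
  induction φ generalizing g with
  | pred P ts => simp only [Formula.lift, TSat, Term.tval_lift]; rfl
  | eq t t' => simp only [Formula.lift, TSat, Term.tval_lift]; rfl
  | falsum => rfl
  | conj φ ψ ihφ ihψ => exact and_congr (ihφ g) (ihψ g)
  | idisj φ ψ ihφ ihψ => exact or_congr (ihφ g) (ihψ g)
  | impl φ ψ ihφ ihψ => exact imp_congr (ihφ g) (ihψ g)
  | all x φ ih => exact forall_congr' fun d => ih _
  | iex x φ ih => exact exists_congr fun d => ih _

theorem Formula.IsClassical.lift {φ : Formula σ} (hφ : φ.IsClassical) :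
    φ.lift.IsClassical := by
  induction φ with
  | conj _ _ ihφ ihψ | impl _ _ ihφ ihψ => exact ⟨ihφ hφ.1, ihψ hφ.2⟩
  | all _ _ ih => exact ih hφ
  | _ => exact hφ

theorem canonModelOf_isId (A : Struc σ) : (canonModelOf A).IsId := fun _ _ _ => Iff.rfl

theorem canonModelOf_isQuotientMapAt (A : Struc σ) (w : A.D × A.D) :
    (canonModelOf A).IsQuotientMapAt w (A.withConsts w.1 w.2) id where
  surjective := surjective_id
  eq_iff _ _ := Iff.rfl
  predI_comp _ _ := Iff.rfl
  funcI_comp f _ := by cases f <;> rfl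

theorem canonModelOf_support_etaOf (A : Struc σ) [Finite A.D] (s : Set (canonModelOf A).W)
    (g : ℕ → (canonModelOf A).D) : Support (canonModelOf A) s g (etaOf extA extB) :=
  (support_etaOf_iff ((canonModelOf_isId A).isEqQuotientOn_id s) extA_not_varOccurs
    extB_not_varOccurs).2 (etaCondition_of_finite (Q := A.D) _ _ s)

theorem canonModelOf_not_support_thetaOf (A : Struc σ) (g : ℕ → (canonModelOf A).D) :
    ¬ Support (canonModelOf A) Set.univ g (thetaOf extA extB) := by
  rw [support_thetaOf_iff ((canonModelOf_isId A).isEqQuotientOn_id _) extA_not_varOccurs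
    extB_not_varOccurs]
  rintro ⟨p, q, h⟩
  exact h (p, q) trivial ⟨rfl, rfl⟩

def FinitelyValid (α : Formula σ) : Prop :=
  ∀ A : Struc σ, Finite A.D → ∀ g : ℕ → A.D, TSat A g α

theorem FinitelyValid.support_idisj_thetaOf {α : Formula σ} (hα : FinitelyValid α)
    (hcl : α.IsClassical) {M : Model (sigExt σ)} {s : Set M.W} {g : ℕ → M.D}
    (hρ : Support M s g rho) (hη : Support M s g (etaOf extA extB)) :
    Support M s g (.idisj α.lift (thetaOf extA extB)) := by
  by_cases hθ : Support M s g (thetaOf extA extB)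
  · exact Or.inr hθ
  refine Or.inl ((hcl.lift.support_iff_forall_tsat M.isQuotientMapAt_quotStruc s g).2
    fun w hw => (tsat_lift _ _ α).2 (hα _ ?_ _))
  exact finite_quotient_of_support extA_not_varOccurs extB_not_varOccurs hρ hη hθ hw

theorem finitelyValid_of_support_canonModelOf {α : Formula σ} (hcl : α.IsClassical)
    (h : ∀ A : Struc σ, Finite A.D → ∀ g : ℕ → A.D,
      Support (canonModelOf A) Set.univ g (.idisj α.lift (thetaOf extA extB))) :
    FinitelyValid α := by
  intro A hA g
  obtain ⟨d⟩ := A.dNonempty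
  have hα := (h A hA g).resolve_right (canonModelOf_not_support_thetaOf A g)
  exact (tsat_lift _ _ α).1
    ((hcl.lift.support_iff_forall_tsat (canonModelOf_isQuotientMapAt A) _ _).1 hα (d, d) trivial)

theorem finite_validity_reduction_general (σ : Sig) (α : Formula σ)
    (hcl : α.IsClassical) :
    ((∀ (A : Struc σ), Finite A.D → ∀ g : ℕ → A.D, TSat A g α) ↔
      IdValid (Formula.impl (etaOf extA extB) (.idisj α.lift (thetaOf extA extB)))) ∧
    ((∀ (A : Struc σ), Finite A.D → ∀ g : ℕ → A.D, TSat A g α) ↔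
      Valid (Formula.impl (.conj rho (etaOf extA extB))
        (.idisj α.lift (thetaOf extA extB)))) := by
  refine ⟨⟨fun hα M hM s g t _ hη =>
      FinitelyValid.support_idisj_thetaOf hα hcl hM.support_rho hη,
      fun h => finitelyValid_of_support_canonModelOf hcl fun A _ g => ?_⟩,
    ⟨fun hα M s g t _ hη => FinitelyValid.support_idisj_thetaOf hα hcl hη.1 hη.2,
      fun h => finitelyValid_of_support_canonModelOf hcl fun A _ g => ?_⟩⟩
  · exact h _ (canonModelOf_isId A) _ g _ subset_rfl (canonModelOf_support_etaOf A _ g)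
  · exact h _ _ g _ subset_rfl
      ⟨(canonModelOf_isId A).support_rho, canonModelOf_support_etaOf A _ g⟩

/-- Reduction of finite validity to InqBQ validity: for a first-order
sentence α in a signature Σ not containing a, b, the following are equivalent:
(1) α is finitely valid; (2) η → (α ⩒ θ) is id-valid over Σ ∪ {a,b};
(3) (ρ ∧ η) → (α ⩒ θ) is valid over Σ ∪ {a,b}. -/
theorem finite_validity_reduction (σ : Sig) (α : Formula σ)
    (hcl : α.IsClassical) (hsen : α.IsSentence) :
    ((∀ (A : Struc σ), Finite A.D → ∀ g : ℕ → A.D, TSat A g α) ↔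
      IdValid (Formula.impl (etaOf extA extB) (.idisj α.lift (thetaOf extA extB)))) ∧
    ((∀ (A : Struc σ), Finite A.D → ∀ g : ℕ → A.D, TSat A g α) ↔
      Valid (Formula.impl (.conj rho (etaOf extA extB))
        (.idisj α.lift (thetaOf extA extB)))) :=
  finite_validity_reduction_general σ α hcl

end InqBQ
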